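/- Let μ be a finite Borel measure on ℝ and define Ψ(u) = ∫ℝ g(u,x) dμ(x), where g(u,x) = (e^{iux} − 1 − iux)/x² for x ≠ 0 and g(u,0) = −u²/2. Then Ψ is twice differentiable with Ψ(0) = 0, Ψ'(0) = 0, Ψ''(u) = −∫ e^{iux} dμ(x), and in particular Ψ''(0) = −μ(ℝ). -/

import Mathlib

/-!
For fixed `x`, `∂g/∂u = i(e^{iux} − 1)/x` (equal to `−u` at `x = 0`) and `∂²g/∂u² = −e^{iux}`.
Since `|∂²g/∂u²| = 1` and both `g` and `∂g/∂u` vanish at `u = 0`, the mean value inequality gives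
`|∂g/∂u| ≤ |u|` and `|g| ≤ u²`. These bounds are uniform in `x`, so on a finite measure both
differentiations may be carried out under the integral sign.
-/

open MeasureTheory Filter Complex

noncomputable section

/-- The function `g(u,x) = (e^{iux} − 1 − iux)/x²`, extended by `g(u,0) = −u²/2`. -/
def gFun (u x : ℝ) : ℂ :=
  if x = 0 then -(u ^ 2) / 2
  else (Complex.exp (u * x * Complex.I) - 1 - u * x * Complex.I) / (x ^ 2)

def gFunDeriv (u x : ℝ) : ℂ :=
  if x = 0 then -u
  else (exp (u * x * I) - 1) * I / x

lemma gFun_zero_left (x : ℝ) : gFun 0 x = 0 := by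
  unfold gFun
  split <;> simp

lemma gFunDeriv_zero_left (x : ℝ) : gFunDeriv 0 x = 0 := by
  unfold gFunDeriv
  split <;> simp

lemma norm_exp_ofReal_mul_ofReal_mul_I (v x : ℝ) : ‖exp (v * x * I)‖ = 1 := by
  exact_mod_cast norm_exp_ofReal_mul_I (v * x)

lemma hasDerivAt_ofReal_mul_ofReal_mul_I (u x : ℝ) :
    HasDerivAt (fun v : ℝ => (v : ℂ) * x * I) (x * I) u := by
  simpa [mul_assoc] using (hasDerivAt_id (u : ℂ)).comp_ofReal.mul_const ((x : ℂ) * I)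

lemma hasDerivAt_gFun (u x : ℝ) : HasDerivAt (fun v => gFun v x) (gFunDeriv u x) u := by
  rcases eq_or_ne x 0 with rfl | hx
  · simp only [gFun, gFunDeriv, if_true]
    refine (((hasDerivAt_id (u : ℂ)).comp_ofReal.pow 2).neg.div_const 2).congr_deriv ?_
    simp [neg_div, mul_div_cancel_left₀]
  · simp only [gFun, gFunDeriv, if_neg hx]
    have hx' : (x : ℂ) ≠ 0 := by exact_mod_cast hx
    refine ((hasDerivAt_ofReal_mul_ofReal_mul_I u x).cexp.sub_const 1 |>.sub
      (hasDerivAt_ofReal_mul_ofReal_mul_I u x)).div_const ((x : ℂ) ^ 2) |>.congr_deriv ?_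
    field_simp

lemma hasDerivAt_gFunDeriv (u x : ℝ) :
    HasDerivAt (fun v => gFunDeriv v x) (-exp (u * x * I)) u := by
  rcases eq_or_ne x 0 with rfl | hx
  · simp only [gFunDeriv, if_true]
    exact (hasDerivAt_id (u : ℂ)).comp_ofReal.neg.congr_deriv (by simp)
  · simp only [gFunDeriv, if_neg hx]
    have hx' : (x : ℂ) ≠ 0 := by exact_mod_cast hx
    refine ((hasDerivAt_ofReal_mul_ofReal_mul_I u x).cexp.sub_const 1 |>.mul_const I).div_const
      (x : ℂ) |>.congr_deriv ?_
    field_simp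
    exact I_sq

lemma measurable_gFun (u : ℝ) : Measurable (gFun u) :=
  Measurable.ite (measurableSet_singleton 0) measurable_const (by fun_prop)

lemma measurable_gFunDeriv (u : ℝ) : Measurable (gFunDeriv u) :=
  Measurable.ite (measurableSet_singleton 0) measurable_const (by fun_prop)

section

variable {E : Type*} [NormedAddCommGroup E] [NormedSpace ℝ E]

lemma norm_le_mul_abs_of_hasDerivAt {f f' : ℝ → E} {C u : ℝ} (h₀ : f 0 = 0)
    (hf : ∀ v, HasDerivAt f (f' v) v) (hf' : ∀ v, |v| ≤ |u| → ‖f' v‖ ≤ C) :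
    ‖f u‖ ≤ C * |u| := by
  have h := (convex_closedBall (0 : ℝ) |u|).norm_image_sub_le_of_norm_hasDerivWithin_le
    (fun v _ => (hf v).hasDerivWithinAt) (fun v hv => hf' v (by simpa using hv))
    (Metric.mem_closedBall_self (abs_nonneg u)) (by simp : u ∈ Metric.closedBall 0 |u|)
  simpa [h₀] using h

lemma hasDerivAt_integral_of_norm_deriv_le {α : Type*} [MeasurableSpace α] {μ : Measure α}
    [IsFiniteMeasure μ] {F F' : ℝ → α → E} {u b : ℝ} {s : Set ℝ} (hs : s ∈ nhds u)
    (hF_meas : ∀ v, AEStronglyMeasurable (F v) μ) (hF_int : Integrable (F u) μ)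
    (hF'_meas : AEStronglyMeasurable (F' u) μ) (hF'_le : ∀ x, ∀ v ∈ s, ‖F' v x‖ ≤ b)
    (hF : ∀ x, ∀ v ∈ s, HasDerivAt (F · x) (F' v x) v) :
    HasDerivAt (fun v => ∫ x, F v x ∂μ) (∫ x, F' u x ∂μ) u :=
  (hasDerivAt_integral_of_dominated_loc_of_deriv_le hs (Eventually.of_forall hF_meas) hF_int
    hF'_meas (Eventually.of_forall hF'_le) (integrable_const b) (Eventually.of_forall hF)).2

end

lemma norm_gFunDeriv_le (u x : ℝ) : ‖gFunDeriv u x‖ ≤ |u| := by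
  simpa using norm_le_mul_abs_of_hasDerivAt (gFunDeriv_zero_left x)
    (fun v => hasDerivAt_gFunDeriv v x)
    (fun v _ => (norm_neg _).trans_le (norm_exp_ofReal_mul_ofReal_mul_I v x).le)

lemma norm_gFun_le (u x : ℝ) : ‖gFun u x‖ ≤ u ^ 2 := by
  simpa [← sq] using norm_le_mul_abs_of_hasDerivAt (gFun_zero_left x)
    (fun v => hasDerivAt_gFun v x) (fun v hv => (norm_gFunDeriv_le v x).trans hv)

section

variable {μ : Measure ℝ} [IsFiniteMeasure μ]

lemma hasDerivAt_integral_gFun (u : ℝ) :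
    HasDerivAt (fun v => ∫ x, gFun v x ∂μ) (∫ x, gFunDeriv u x ∂μ) u := by
  have h_int : Integrable (gFun u) μ :=
    .of_bound (measurable_gFun u).aestronglyMeasurable (u ^ 2)
      (Eventually.of_forall (norm_gFun_le u))
  refine hasDerivAt_integral_of_norm_deriv_le (Metric.ball_mem_nhds u one_pos)
    (fun v => (measurable_gFun v).aestronglyMeasurable) h_int
    (measurable_gFunDeriv u).aestronglyMeasurable (b := |u| + 1) (fun x v hv => ?_)
    (fun x v _ => hasDerivAt_gFun v x)
  have hv : |v - u| < 1 := by simpa [Real.dist_eq] using hv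
  calc ‖gFunDeriv v x‖ ≤ |v| := norm_gFunDeriv_le v x
    _ ≤ |u| + 1 := by linarith [abs_sub_abs_le_abs_sub v u]

lemma hasDerivAt_integral_gFunDeriv (u : ℝ) :
    HasDerivAt (fun v => ∫ x, gFunDeriv v x ∂μ) (-∫ x, exp (u * x * I) ∂μ) u := by
  have h_int : Integrable (gFunDeriv u) μ :=
    .of_bound (measurable_gFunDeriv u).aestronglyMeasurable |u|
      (Eventually.of_forall (norm_gFunDeriv_le u))
  rw [← integral_neg]
  exact hasDerivAt_integral_of_norm_deriv_le Filter.univ_mem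
    (fun v => (measurable_gFunDeriv v).aestronglyMeasurable) h_int (by fun_prop) (b := 1)
    (fun x v _ => (norm_neg _).trans_le (norm_exp_ofReal_mul_ofReal_mul_I v x).le)
    (fun x v _ => hasDerivAt_gFunDeriv v x)

end

theorem psi_derivatives (μ : Measure ℝ) [IsFiniteMeasure μ] :
    (∫ x, gFun 0 x ∂μ) = 0 ∧
    ∃ Ψ' : ℝ → ℂ,
      (∀ u : ℝ, HasDerivAt (fun v => ∫ x, gFun v x ∂μ) (Ψ' u) u) ∧
      Ψ' 0 = 0 ∧
      (∀ u : ℝ, HasDerivAt Ψ' (-∫ x, Complex.exp (u * x * Complex.I) ∂μ) u) ∧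
      (-∫ x, Complex.exp ((0 : ℝ) * x * Complex.I) ∂μ) = -((μ Set.univ).toReal : ℂ) := by
  refine ⟨by simp [gFun_zero_left], fun u => ∫ x, gFunDeriv u x ∂μ, hasDerivAt_integral_gFun,
    by simp [gFunDeriv_zero_left], hasDerivAt_integral_gFunDeriv, ?_⟩
  simp [Measure.real]
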